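/- arXiv:math-ph/0611050 — 3 statements merged into one kernel-verified Lean document; each statement's English description precedes it below -/
import Mathlib

section
/- Let S₂ : ℝ → ℂ satisfy S₂(-θ) = S₂(θ)⁻¹ and |S₂(θ)| = 1 for all θ ∈ ℝ. For each transposition τ_k ∈ S_n exchanging k and k+1, define the operator D_n(τ_k) on L²(ℝⁿ) by (D_n(τ_k)f)(θ₁,...,θ_n) = S₂(θ_{k+1} - θ_k) · f(θ₁,...,θ_{k+1},θ_k,...,θ_n). Then D_n(τ_k)² = 1, D_n(τ_j) and D_n(τ_k) commute for |j-k| > 1, and D_n(τ_k)D_n(τ_{k+1})D_n(τ_k) = D_n(τ_{k+1})D_n(τ_k)D_n(τ_{k+1}); hence D_n extends to a unitary representation of the symmetric group S_n on L²(ℝⁿ). -/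
open MeasureTheory Complex

/-- The `n`-particle `L²` space over `ℝⁿ`. -/
noncomputable abbrev L2n (n : ℕ) :=
  MeasureTheory.Lp ℂ 2 (MeasureTheory.volume : MeasureTheory.Measure (Fin n → ℝ))

/-- The defining almost-everywhere action of the operator `D_n(τ_k)` on `L²(ℝⁿ)`:
`(D_n(τ_k) f)(θ₁,…,θ_n) = S₂(θ_{k+1} - θ_k) · f(θ₁,…,θ_{k+1},θ_k,…,θ_n)`. -/
def IsDnGenerator {n : ℕ} (S₂ : ℝ → ℂ) (k : ℕ) (hk : k + 1 < n)
    (D : L2n n →L[ℂ] L2n n) : Prop :=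
  ∀ f : L2n n,
    ∀ᵐ θ ∂(volume : Measure (Fin n → ℝ)),
      D f θ = S₂ (θ ⟨k + 1, hk⟩ - θ ⟨k, Nat.lt_of_succ_lt hk⟩) *
        f (fun i => θ (Equiv.swap (⟨k, Nat.lt_of_succ_lt hk⟩ : Fin n) ⟨k + 1, hk⟩ i))

/-!
The operators `D_n(τ_k)` are the images of the adjacent transpositions under an explicit
representation of `Sₙ`: `σ` acts by `f ↦ M_σ · (f ∘ σ)`, where the multiplier `M_σ(θ)` is the
product of the two-body factors `S₂(θ_a - θ_b)` over the pairs of coordinates that `σ` inverts.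
Because `S₂` is unimodular with `S₂(-x) = S₂(x)⁻¹`, `M` is a cocycle,
`M_{στ}(θ) = M_σ(θ) · M_τ(θ ∘ σ)`, and each operator is a unimodular multiplication composed with
a measure-preserving change of variables. The Coxeter relations for the `D_n(τ_k)` are then the
corresponding relations between transpositions in `Sₙ`.
-/

open Equiv

namespace Equiv

variable {α : Type*} [DecidableEq α]

theorem swap_braid {a b c : α} (hab : a ≠ b) (hac : a ≠ c) (hbc : b ≠ c) :
    swap a b * swap b c * swap a b = swap b c * swap a b * swap b c := by
  rw [swap_mul_swap_mul_swap hab hac, swap_comm a b, swap_comm b c,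
    swap_mul_swap_mul_swap hbc.symm hac.symm, swap_comm]

end Equiv

namespace Equiv.Perm

variable {ι G : Type*} [Fintype ι] [LinearOrder ι] [CommGroup G]

def inversionProd (φ : ι → ι → G) (σ : Perm ι) : G :=
  ∏ p : ι × ι, if p.1 < p.2 ∧ σ p.2 < σ p.1 then φ (σ p.1) (σ p.2) else 1

@[simp]
theorem inversionProd_one (φ : ι → ι → G) : inversionProd φ 1 = 1 :=
  Finset.prod_eq_one fun _ _ => if_neg fun h => lt_asymm h.1 h.2

theorem inversionProd_mul {φ : ι → ι → G} (hφ : ∀ a b, φ b a = (φ a b)⁻¹) (σ τ : Perm ι) :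
    inversionProd φ (σ * τ) =
      inversionProd φ σ * inversionProd (fun a b => φ (σ a) (σ b)) τ := by
  -- The factors of `F p` are the contributions of the pair `p` (reindexed by `τ` for the first
  -- product); the contributions of `p` and of `p.swap` cancel.
  set F : ι × ι → G := fun p =>
    (if τ p.1 < τ p.2 ∧ σ (τ p.2) < σ (τ p.1) then φ (σ (τ p.1)) (σ (τ p.2)) else 1) *
    (if p.1 < p.2 ∧ τ p.2 < τ p.1 then φ (σ (τ p.1)) (σ (τ p.2)) else 1) /
    (if p.1 < p.2 ∧ σ (τ p.2) < σ (τ p.1) then φ (σ (τ p.1)) (σ (τ p.2)) else 1) with hF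
  have hpair : ∀ p, F p * F p.swap = 1 := by
    rintro ⟨i, j⟩
    simp only [hF, Prod.swap, hφ (σ (τ i))]
    by_cases hij : i = j
    · subst hij
      simp
    have hab : τ i ≠ τ j := τ.injective.ne hij
    have hcd : σ (τ i) ≠ σ (τ j) := σ.injective.ne hab
    generalize τ i = a, τ j = b at *
    generalize σ a = c, σ b = d at *
    generalize φ c d = x
    rcases Ne.lt_or_gt hij with h | h <;> rcases hab.lt_or_gt with h1 | h1 <;>
      rcases hcd.lt_or_gt with h2 | h2 <;>
      simp [h, h1, h2, h.not_gt, h1.not_gt, h2.not_gt]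
  have hprod : ∏ p, F p = 1 := by
    refine Finset.prod_ninvolution Prod.swap hpair ?_ (fun _ => Finset.mem_univ _)
      Prod.swap_swap
    rintro ⟨i, j⟩ hne hij
    obtain rfl : j = i := congrArg Prod.fst hij
    simp [hF] at hne
  simp only [hF, Finset.prod_div_distrib, Finset.prod_mul_distrib, div_eq_one] at hprod
  have hσ : inversionProd φ σ = ∏ p : ι × ι,
      if τ p.1 < τ p.2 ∧ σ (τ p.2) < σ (τ p.1) then φ (σ (τ p.1)) (σ (τ p.2)) else 1 :=
    (Fintype.prod_equiv (prodCongr τ τ) _ _ fun _ => rfl).symm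
  rw [hσ]
  exact hprod.symm

theorem inversionProd_swap_of_covBy (φ : ι → ι → G) {a b : ι} (hab : a ⋖ b) :
    inversionProd φ (swap a b) = φ b a := by
  rw [inversionProd, Finset.prod_eq_single (a, b)]
  · simp [hab.lt]
  · rintro ⟨i, j⟩ - hne
    refine if_neg fun ⟨hij, hinv⟩ => hne ?_
    dsimp only at hij hinv
    obtain ⟨hlt, hno⟩ := hab
    rw [Prod.mk.injEq]
    rw [swap_apply_def, swap_apply_def] at hinv
    split_ifs at hinv <;> grind
  · exact fun h => (h (Finset.mem_univ _)).elim

end Equiv.Perm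

namespace MeasureTheory.Lp

variable {α : Type*} [MeasurableSpace α] {μ : Measure α} {p : ENNReal} {u : α → ℂ}

theorem eLpNorm_mul_of_norm_eq_one (hu : ∀ᵐ x ∂μ, ‖u x‖ = 1) (f : α → ℂ) :
    eLpNorm (fun x => u x * f x) p μ = eLpNorm f p μ :=
  eLpNorm_congr_norm_ae (by filter_upwards [hu] with x hx; rw [norm_mul, hx, one_mul])

theorem memLp_mul_of_norm_eq_one (hu_meas : AEStronglyMeasurable u μ)
    (hu : ∀ᵐ x ∂μ, ‖u x‖ = 1) (f : Lp ℂ p μ) : MemLp (fun x => u x * f x) p μ :=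
  ⟨hu_meas.mul (Lp.aestronglyMeasurable f),
    (eLpNorm_mul_of_norm_eq_one hu f).trans_lt (Lp.eLpNorm_lt_top f)⟩

noncomputable def mulUnimodularₗᵢ [Fact (1 ≤ p)] (u : α → ℂ) (hu_meas : AEStronglyMeasurable u μ)
    (hu : ∀ᵐ x ∂μ, ‖u x‖ = 1) : Lp ℂ p μ →ₗᵢ[ℂ] Lp ℂ p μ where
  toFun f := (memLp_mul_of_norm_eq_one hu_meas hu f).toLp _
  map_add' f g := by
    rw [← MemLp.toLp_add]
    refine MemLp.toLp_congr _ _ ?_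
    filter_upwards [Lp.coeFn_add f g] with x hx
    simp only [hx, Pi.add_apply, mul_add]
  map_smul' c f := by
    rw [← MemLp.toLp_const_smul]
    refine MemLp.toLp_congr _ _ ?_
    filter_upwards [Lp.coeFn_smul c f] with x hx
    simp only [hx, Pi.smul_apply, smul_eq_mul, RingHom.id_apply]
    ring
  norm_map' f := by
    rw [LinearMap.coe_mk, AddHom.coe_mk, Lp.norm_toLp, eLpNorm_mul_of_norm_eq_one hu,
      Lp.norm_def]

theorem coeFn_mulUnimodularₗᵢ [Fact (1 ≤ p)] (u : α → ℂ) (hu_meas : AEStronglyMeasurable u μ)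
    (hu : ∀ᵐ x ∂μ, ‖u x‖ = 1) (f : Lp ℂ p μ) :
    mulUnimodularₗᵢ u hu_meas hu f =ᵐ[μ] fun x => u x * f x :=
  (memLp_mul_of_norm_eq_one hu_meas hu f).coeFn_toLp

end MeasureTheory.Lp

namespace Equiv.Perm

variable {ι : Type*} [Fintype ι]

theorem measurePreserving_comp_perm (σ : Perm ι) :
    MeasurePreserving (fun θ : ι → ℝ => θ ∘ σ) volume volume :=
  volume_preserving_arrowCongr' σ.symm (MeasurableEquiv.refl ℝ) (MeasurePreserving.id _)

variable [LinearOrder ι] {p : ENNReal} [Fact (1 ≤ p)] (S : ℝ → Circle)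

noncomputable def twoBodyMultiplier (σ : Perm ι) (θ : ι → ℝ) : Circle :=
  inversionProd (fun a b => S (θ a - θ b)) σ

variable {S}

theorem twoBodyMultiplier_mul (hS_inv : ∀ x, S (-x) = (S x)⁻¹) (σ τ : Perm ι) (θ : ι → ℝ) :
    twoBodyMultiplier S (σ * τ) θ =
      twoBodyMultiplier S σ θ * twoBodyMultiplier S τ (θ ∘ σ) :=
  inversionProd_mul (fun a b => by rw [← hS_inv, neg_sub]) σ τ

theorem measurable_twoBodyMultiplier (hS_meas : Measurable fun x => (S x : ℂ)) (σ : Perm ι) :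
    Measurable fun θ => (twoBodyMultiplier S σ θ : ℂ) := by
  have hcoe : (fun θ => (twoBodyMultiplier S σ θ : ℂ)) = fun θ => ∏ q : ι × ι,
      if q.1 < q.2 ∧ σ q.2 < σ q.1 then (S (θ (σ q.1) - θ (σ q.2)) : ℂ) else 1 :=
    funext fun θ => (map_prod Circle.coeHom _ _).trans
      (Finset.prod_congr rfl fun q _ => by rw [apply_ite Circle.coeHom, map_one]; rfl)
  rw [hcoe]
  refine Finset.measurable_prod _ fun q _ => ?_
  split_ifs
  · exact hS_meas.comp ((measurable_pi_apply _).sub (measurable_pi_apply _))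
  · exact measurable_const

noncomputable def twoBodyOperator (hS_meas : Measurable fun x => (S x : ℂ)) (σ : Perm ι) :
    Lp ℂ p (volume : Measure (ι → ℝ)) →ₗᵢ[ℂ] Lp ℂ p (volume : Measure (ι → ℝ)) :=
  (Lp.mulUnimodularₗᵢ (fun θ => (twoBodyMultiplier S σ θ : ℂ))
      (measurable_twoBodyMultiplier hS_meas σ).aestronglyMeasurable
      (ae_of_all _ fun _ => Circle.norm_coe _)).comp
    (Lp.compMeasurePreservingₗᵢ ℂ _ (measurePreserving_comp_perm σ))

theorem coeFn_twoBodyOperator (hS_meas : Measurable fun x => (S x : ℂ)) (σ : Perm ι)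
    (f : Lp ℂ p (volume : Measure (ι → ℝ))) :
    twoBodyOperator hS_meas σ f =ᵐ[volume] fun θ => twoBodyMultiplier S σ θ * f (θ ∘ σ) := by
  filter_upwards [Lp.coeFn_mulUnimodularₗᵢ _ _ _ (Lp.compMeasurePreservingₗᵢ ℂ _
      (measurePreserving_comp_perm σ) f),
    Lp.coeFn_compMeasurePreserving f (measurePreserving_comp_perm σ)] with _ hmul hcomp
  rw [twoBodyOperator, LinearIsometry.coe_comp, Function.comp_apply, hmul]
  exact congrArg _ hcomp

theorem twoBodyOperator_one (hS_meas : Measurable fun x => (S x : ℂ))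
    (f : Lp ℂ p (volume : Measure (ι → ℝ))) : twoBodyOperator hS_meas 1 f = f := by
  refine Lp.ext ?_
  filter_upwards [coeFn_twoBodyOperator hS_meas 1 f] with θ hθ
  simp [hθ, twoBodyMultiplier]

theorem twoBodyOperator_mul (hS_meas : Measurable fun x => (S x : ℂ))
    (hS_inv : ∀ x, S (-x) = (S x)⁻¹) (σ τ : Perm ι) (f : Lp ℂ p (volume : Measure (ι → ℝ))) :
    twoBodyOperator hS_meas (σ * τ) f =
      twoBodyOperator hS_meas σ (twoBodyOperator hS_meas τ f) := by
  refine Lp.ext ?_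
  filter_upwards [coeFn_twoBodyOperator hS_meas (σ * τ) f,
    coeFn_twoBodyOperator hS_meas σ (twoBodyOperator hS_meas τ f),
    (measurePreserving_comp_perm σ).quasiMeasurePreserving.ae_eq_comp
      (coeFn_twoBodyOperator hS_meas τ f)] with θ hστ hσ hτ
  rw [hστ, hσ, twoBodyMultiplier_mul hS_inv, Circle.coe_mul, mul_assoc]
  exact congrArg _ hτ.symm

noncomputable def twoBodyEquiv (hS_meas : Measurable fun x => (S x : ℂ))
    (hS_inv : ∀ x, S (-x) = (S x)⁻¹) (σ : Perm ι) :
    Lp ℂ p (volume : Measure (ι → ℝ)) ≃ₗᵢ[ℂ] Lp ℂ p (volume : Measure (ι → ℝ)) :=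
  LinearIsometryEquiv.ofSurjective (twoBodyOperator hS_meas σ) fun f =>
    ⟨twoBodyOperator hS_meas σ⁻¹ f, by
      rw [← twoBodyOperator_mul hS_meas hS_inv, mul_inv_cancel, twoBodyOperator_one]⟩

theorem twoBodyEquiv_apply (hS_meas : Measurable fun x => (S x : ℂ))
    (hS_inv : ∀ x, S (-x) = (S x)⁻¹) (σ : Perm ι) (f : Lp ℂ p (volume : Measure (ι → ℝ))) :
    twoBodyEquiv hS_meas hS_inv σ f = twoBodyOperator hS_meas σ f :=
  rfl

noncomputable def twoBodyRep (hS_meas : Measurable fun x => (S x : ℂ))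
    (hS_inv : ∀ x, S (-x) = (S x)⁻¹) :
    Perm ι →* (Lp ℂ p (volume : Measure (ι → ℝ)) ≃ₗᵢ[ℂ] Lp ℂ p (volume : Measure (ι → ℝ))) where
  toFun := twoBodyEquiv hS_meas hS_inv
  map_one' := LinearIsometryEquiv.ext fun f => by
    rw [twoBodyEquiv_apply, twoBodyOperator_one, LinearIsometryEquiv.coe_one, id]
  map_mul' σ τ := LinearIsometryEquiv.ext fun f => by
    rw [LinearIsometryEquiv.coe_mul, Function.comp_apply, twoBodyEquiv_apply, twoBodyEquiv_apply,
      twoBodyEquiv_apply, twoBodyOperator_mul hS_meas hS_inv]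

theorem coeFn_twoBodyRep_swap (hS_meas : Measurable fun x => (S x : ℂ))
    (hS_inv : ∀ x, S (-x) = (S x)⁻¹) {a b : ι} (hab : a ⋖ b)
    (f : Lp ℂ p (volume : Measure (ι → ℝ))) :
    twoBodyRep hS_meas hS_inv (swap a b) f =ᵐ[volume]
      fun θ => S (θ b - θ a) * f (θ ∘ swap a b) := by
  have h := coeFn_twoBodyOperator hS_meas (swap a b) f
  simp only [twoBodyMultiplier, inversionProd_swap_of_covBy _ hab] at h
  exact h

end Equiv.Perm

/-- the operators `D_n(τ_k)` satisfy the defining relations of the symmetric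
group, and hence `D_n` extends to a unitary representation of `S_n` on `L²(ℝⁿ)`. -/
theorem statement0 {n : ℕ} (S₂ : ℝ → ℂ) (hSmeas : Measurable S₂)
    (hSmod : ∀ θ : ℝ, ‖S₂ θ‖ = 1) (hSinv : ∀ θ : ℝ, S₂ (-θ) = (S₂ θ)⁻¹)
    (D : ∀ k : ℕ, k + 1 < n → (L2n n →L[ℂ] L2n n))
    (hD : ∀ (k : ℕ) (hk : k + 1 < n), IsDnGenerator S₂ k hk (D k hk)) :
    (∀ (k : ℕ) (hk : k + 1 < n), D k hk ∘L D k hk = 1) ∧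
    (∀ (j k : ℕ) (hj : j + 1 < n) (hk : k + 1 < n),
      (j + 1 < k ∨ k + 1 < j) → D j hj ∘L D k hk = D k hk ∘L D j hj) ∧
    (∀ (k : ℕ) (hk : k + 1 + 1 < n),
      D k (by omega) ∘L D (k + 1) hk ∘L D k (by omega) =
        D (k + 1) hk ∘L D k (by omega) ∘L D (k + 1) hk) ∧
    (∃ ρ : Equiv.Perm (Fin n) →* (L2n n ≃ₗᵢ[ℂ] L2n n),
      ∀ (k : ℕ) (hk : k + 1 < n) (f : L2n n),
        ρ (Equiv.swap (⟨k, Nat.lt_of_succ_lt hk⟩ : Fin n) ⟨k + 1, hk⟩) f = D k hk f) := by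
  let S : ℝ → Circle := fun x => ⟨S₂ x, by simp [Submonoid.unitSphere, hSmod]⟩
  have hS_inv : ∀ x, S (-x) = (S x)⁻¹ := fun x => Circle.ext (hSinv x)
  set ρ := Perm.twoBodyRep (ι := Fin n) (p := 2) (S := S) hSmeas hS_inv
  have hρ : ∀ σ τ f, ρ σ (ρ τ f) = ρ (σ * τ) f := fun σ τ f => by
    rw [map_mul, LinearIsometryEquiv.coe_mul, Function.comp_apply]
  have hDρ : ∀ k (hk : k + 1 < n) f, D k hk f = ρ (swap ⟨k, by omega⟩ ⟨k + 1, hk⟩) f := by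
    intro k hk f
    have hcov : (⟨k, by omega⟩ : Fin n) ⋖ ⟨k + 1, hk⟩ :=
      ⟨Fin.mk_lt_mk.2 k.lt_succ_self, fun c h1 h2 => by simp only [Fin.lt_def] at h1 h2; omega⟩
    refine Lp.ext ?_
    filter_upwards [hD k hk f, Perm.coeFn_twoBodyRep_swap (p := 2) hSmeas hS_inv hcov f]
      with θ hDθ hρθ
    rw [hDθ, hρθ]
    rfl
  refine ⟨fun k hk => ?_, fun j k hj hk hjk => ?_, fun k hk => ?_, ρ,
    fun k hk f => (hDρ k hk f).symm⟩
  · ext1 f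
    rw [ContinuousLinearMap.comp_apply, hDρ, hDρ, hρ, swap_mul_self, map_one]
    rfl
  · have hdisj : Perm.Disjoint (swap (⟨j, by omega⟩ : Fin n) ⟨j + 1, hj⟩)
        (swap ⟨k, by omega⟩ ⟨k + 1, hk⟩) :=
      Perm.disjoint_swap_swap (by simp [Fin.ext_iff]; omega)
    ext1 f
    rw [ContinuousLinearMap.comp_apply, ContinuousLinearMap.comp_apply, hDρ, hDρ, hDρ, hDρ, hρ, hρ,
      hdisj.commute.eq]
  · have hbraid := swap_braid (a := (⟨k, by omega⟩ : Fin n)) (b := ⟨k + 1, by omega⟩)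
      (c := ⟨k + 2, hk⟩) (by simp) (by simp) (by simp)
    ext1 f
    simp only [ContinuousLinearMap.comp_apply, hDρ, hρ, ← mul_assoc]
    exact congrArg (ρ · f) hbraid
end

section
/- For the representation D_n of S_n on L²(ℝⁿ) determined by a modulus-one phase function S₂ with S₂(-θ) = S₂(θ)⁻¹, the action of an arbitrary permutation π ∈ S_n is given explicitly by (D_n(π)f)(θ₁,...,θ_n) = S^π(θ₁,...,θ_n) · f(θ_{π(1)},...,θ_{π(n)}), where S^π(θ₁,...,θ_n) = ∏_{1 ≤ l < k ≤ n, π(l) > π(k)} S₂(θ_{π(l)} - θ_{π(k)}). -/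
open MeasureTheory Complex

/-! Write `S^π(θ) = ∏_{(l, k) inversion of π} c (π l) (π k)` with `c x y = S₂ (θ x - θ y)`.
For an adjacent transposition `τ`, the inversions of `τ * π` are those of `π` plus or minus the
single pair that `π` sends to the swapped positions, so `S^{τπ}(θ) = S^τ(θ) · S^π(θ ∘ τ)`; the
minus case needs `S₂(t) S₂(-t) = 1`. Since `D_n` obeys the same rule on the generators, induction
along a word in adjacent transpositions gives the formula for every permutation. -/

open Finset Equiv

namespace Equiv.Perm

section
variable {α : Type*} [LinearOrder α] {u v x y : α}

theorem swap_lt_swap_iff_of_covBy (huv : u ⋖ v) (hxy : (x, y) ≠ (u, v))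
    (hyx : (x, y) ≠ (v, u)) : swap u v x < swap u v y ↔ x < y := by
  have hlt : ∀ {z}, z < v ↔ z ≤ u := huv.lt_iff_le_left
  have hgt : ∀ {z}, u < z ↔ v ≤ z := huv.lt_iff_le_right
  simp only [ne_eq, Prod.mk.injEq, not_and] at hxy hyx
  rw [swap_apply_def, swap_apply_def]
  split_ifs <;> grind

variable [Fintype α]

def inversions (π : Perm α) : Finset (α × α) :=
  univ.filter fun p => p.1 < p.2 ∧ π p.2 < π p.1

theorem mem_inversions {π : Perm α} {p : α × α} :
    p ∈ inversions π ↔ p.1 < p.2 ∧ π p.2 < π p.1 := by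
  simp [inversions]

theorem inversions_one : inversions (1 : Perm α) = ∅ := by
  ext p
  simpa [mem_inversions] using le_of_lt

theorem notMem_inversions_of_covBy {π : Perm α} {a b : α} (huv : u ⋖ v)
    (ha : π a = u) (hb : π b = v) : (a, b) ∉ inversions π := by
  simp [mem_inversions, ha, hb, huv.lt.le]

theorem inversions_swap_mul {π : Perm α} {a b : α} (huv : u ⋖ v) (hab : a < b)
    (ha : π a = u) (hb : π b = v) :
    inversions (swap u v * π) = insert (a, b) (inversions π) := by
  ext ⟨x, y⟩
  simp only [mem_insert, mem_inversions, Perm.mul_apply]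
  rcases eq_or_ne (x, y) (a, b) with hxy | hxy
  · simp_all [huv.lt]
  rcases eq_or_ne (x, y) (b, a) with hyx | hyx
  · simp_all [hab.not_gt]
  subst ha hb
  rw [swap_lt_swap_iff_of_covBy huv (by grind [Equiv.apply_eq_iff_eq])
    (by grind [Equiv.apply_eq_iff_eq])]
  simp [hxy]

variable {M : Type*} [CommMonoid M]

def inversionProduct (c : α → α → M) (π : Perm α) : M :=
  ∏ p ∈ inversions π, c (π p.1) (π p.2)

theorem inversionProduct_one (c : α → α → M) : inversionProduct c 1 = 1 := by
  simp [inversionProduct, inversions_one]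

theorem inversionProduct_swap_mul (c : α → α → M) (huv : u ⋖ v) (hc : c v u * c u v = 1)
    (π : Perm α) :
    inversionProduct c (swap u v * π) =
      c v u * inversionProduct (fun x y => c (swap u v x) (swap u v y)) π := by
  unfold inversionProduct
  rcases lt_or_gt_of_ne (π.symm.injective.ne huv.ne) with h | h
  · rw [inversions_swap_mul huv h (π.apply_symm_apply u) (π.apply_symm_apply v),
      prod_insert (notMem_inversions_of_covBy huv (π.apply_symm_apply u) (π.apply_symm_apply v))]
    simp
  · -- Here the pair is an inversion of `π = swap u v * (swap u v * π)` instead.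
    have hτu : (swap u v * π) (π.symm v) = u := by simp
    have hτv : (swap u v * π) (π.symm u) = v := by simp
    conv_rhs => rw [← swap_mul_self_mul u v π]
    rw [inversions_swap_mul huv h hτu hτv, prod_insert (notMem_inversions_of_covBy huv hτu hτv)]
    simp only [Perm.mul_apply, apply_symm_apply, swap_apply_self, swap_apply_left,
      swap_apply_right]
    rw [← mul_assoc, hc, one_mul]

end

theorem mclosure_swap_adjacent_eq_top (n : ℕ) :
    Submonoid.closure {σ : Perm (Fin n) |
      ∃ (k : ℕ) (hk : k + 1 < n), σ = swap ⟨k, Nat.lt_of_succ_lt hk⟩ ⟨k + 1, hk⟩} = ⊤ := by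
  cases n with
  | zero => exact Subsingleton.elim _ _
  | succ m =>
    refine top_unique ((mclosure_swap_castSucc_succ m).ge.trans (Submonoid.closure_mono ?_))
    rintro _ ⟨i, rfl⟩
    exact ⟨i, by omega, rfl⟩

end Equiv.Perm

open Equiv.Perm

theorem volume_measurePreserving_comp_perm {ι β : Type*} [Fintype ι] [MeasureSpace β]
    [SigmaFinite (volume : Measure β)] (e : Perm ι) :
    MeasurePreserving (fun θ : ι → β => fun i => θ (e i)) volume volume := by
  convert volume_measurePreserving_piCongrLeft (fun _ : ι => β) e.symm using 1
  ext θ i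
  simp [MeasurableEquiv.coe_piCongrLeft, Equiv.piCongrLeft_apply_eq_cast]

theorem statement2_general {n : ℕ} (S₂ : ℝ → ℂ)
    (hSmod : ∀ θ : ℝ, ‖S₂ θ‖ = 1) (hSinv : ∀ θ : ℝ, S₂ (-θ) = (S₂ θ)⁻¹)
    (ρ : Equiv.Perm (Fin n) →* (L2n n ≃ₗᵢ[ℂ] L2n n))
    (hρ : ∀ (k : ℕ) (hk : k + 1 < n),
      IsDnGenerator S₂ k hk
        ((ρ (Equiv.swap (⟨k, Nat.lt_of_succ_lt hk⟩ : Fin n)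
            ⟨k + 1, hk⟩)).toLinearIsometry.toContinuousLinearMap)) :
    ∀ (π : Equiv.Perm (Fin n)) (f : L2n n),
      ∀ᵐ θ ∂(volume : Measure (Fin n → ℝ)),
        ρ π f θ =
          (∏ p ∈ Finset.univ.filter
              (fun p : Fin n × Fin n => p.1 < p.2 ∧ π p.2 < π p.1),
            S₂ (θ (π p.1) - θ (π p.2))) * f (fun i => θ (π i)) := by
  have hS : ∀ s t : ℝ, S₂ (s - t) * S₂ (t - s) = 1 := fun s t => by
    rw [← neg_sub s t, hSinv, mul_inv_cancel₀ (norm_ne_zero_iff.mp (by simp [hSmod]))]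
  intro π
  change ∀ f : L2n n, ∀ᵐ θ ∂volume,
    ρ π f θ = inversionProduct (fun x y => S₂ (θ x - θ y)) π * f (fun i => θ (π i))
  induction π using Submonoid.induction_of_closure_eq_top_left
    (mclosure_swap_adjacent_eq_top n) with
  | one =>
    intro f
    filter_upwards with θ
    simp [inversionProduct_one]
  | mul_left σ hσ π ih =>
    obtain ⟨k, hk, rfl⟩ := hσ
    set τ : Perm (Fin n) := swap ⟨k, Nat.lt_of_succ_lt hk⟩ ⟨k + 1, hk⟩
    have hcov : (⟨k, Nat.lt_of_succ_lt hk⟩ : Fin n) ⋖ ⟨k + 1, hk⟩ := by simp [Fin.covBy_iff]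
    intro f
    have hπ := (volume_measurePreserving_comp_perm τ).quasiMeasurePreserving.ae_eq_comp (ih f)
    filter_upwards [hρ k hk (ρ π f), hπ] with θ hτθ hπθ
    rw [inversionProduct_swap_mul _ hcov (hS _ _), map_mul, mul_assoc]
    exact hτθ.trans (congrArg _ hπθ)

/-- the explicit action of an arbitrary permutation `π` in the
representation `D_n` of `S_n` on `L²(ℝⁿ)` determined by `S₂`:
`(D_n(π)f)(θ₁,…,θ_n) = S^π(θ₁,…,θ_n) · f(θ_{π(1)},…,θ_{π(n)})`, where
`S^π(θ) = ∏_{l < k, π(l) > π(k)} S₂(θ_{π(l)} - θ_{π(k)})`. -/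
theorem statement2 {n : ℕ} (S₂ : ℝ → ℂ) (hSmeas : Measurable S₂)
    (hSmod : ∀ θ : ℝ, ‖S₂ θ‖ = 1) (hSinv : ∀ θ : ℝ, S₂ (-θ) = (S₂ θ)⁻¹)
    (ρ : Equiv.Perm (Fin n) →* (L2n n ≃ₗᵢ[ℂ] L2n n))
    (hρ : ∀ (k : ℕ) (hk : k + 1 < n),
      IsDnGenerator S₂ k hk
        ((ρ (Equiv.swap (⟨k, Nat.lt_of_succ_lt hk⟩ : Fin n)
            ⟨k + 1, hk⟩)).toLinearIsometry.toContinuousLinearMap)) :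
    ∀ (π : Equiv.Perm (Fin n)) (f : L2n n),
      ∀ᵐ θ ∂(volume : Measure (Fin n → ℝ)),
        ρ π f θ =
          (∏ p ∈ Finset.univ.filter
              (fun p : Fin n × Fin n => p.1 < p.2 ∧ π p.2 < π p.1),
            S₂ (θ (π p.1) - θ (π p.2))) * f (fun i => θ (π i)) :=
  statement2_general S₂ hSmod hSinv ρ hρ
end

section
/- Let H be a Hilbert space carrying a net of von Neumann algebras indexed by wedges, let W ⊂ ℝ^d be a region with W + x ⊂ W for some direction x, let U be a unitary representation of translations under which the net is covariant with invariant vacuum Ω satisfying the cluster property ⟨AΩ, U(nx)BΩ⟩ → ⟨Ω,AΩ⟩⟨Ω,BΩ⟩ as n → ∞, and let H ≥ 0 be the Hamiltonian commuting with the spatial translations U(nx). If A(W) ≠ ℂ·1, then the map Θ_{β,W} : A(W) → H, A ↦ e^{-βH}AΩ, is not compact for any β > 0. Specifically: if A ∈ A(W) with ⟨Ω, AΩ⟩ = 0, A ≠ 0, and e^{-βH}AΩ ≠ 0, then the sequence Ψ_n := e^{-βH}U(nx)AU(nx)^{-1}Ω has constant norm ‖e^{-βH}AΩ‖ ≠ 0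 and ⟨Ψ_n, Ψ_m⟩ → 0 as |n-m| → ∞, hence has no norm-convergent subsequence. -/
/-!
Translations commute with `e` and preserve the inner product, so
`⟪e (uᵐ AΩ), e (uᵐ⁺ⁿ AΩ)⟫ = ⟪AΩ, uⁿ (e² AΩ)⟫`, which tends to `⟪AΩ, Ω⟫ ⟪Ω, e² AΩ⟫ = 0` by
clustering. Hence `Ψₘ = e (uᵐ AΩ)` all have norm `c = ‖e AΩ‖ > 0` and become asymptotically
orthogonal, so far-apart terms are at distance more than `c` and no subsequence is Cauchy.
Since `Ψₘ = e (Bₘ Ω)` for the translates `Bₘ = uᵐ A u⁻ᵐ ∈ S` of norm at most `‖A‖`, the image of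
the ball of radius `‖A‖` of `S` cannot lie in a compact set.
-/

open Filter Topology

section AsymptoticOrthogonality

variable (𝕜 : Type*) {E : Type*} [RCLike 𝕜] [NormedAddCommGroup E] [InnerProductSpace 𝕜 E]

def AsymptoticallyOrthogonal (ψ : ℕ → E) : Prop :=
  ∀ ε : ℝ, 0 < ε → ∃ N : ℕ, ∀ m k : ℕ, m + N ≤ k → ‖(inner 𝕜 (ψ m) (ψ k) : 𝕜)‖ < ε

variable {𝕜}

theorem asymptoticallyOrthogonal_of_inner_add_eq {ψ : ℕ → E} {f : ℕ → 𝕜}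
    (hψ : ∀ m n, inner 𝕜 (ψ m) (ψ (m + n)) = f n) (hf : Tendsto f atTop (𝓝 0)) :
    AsymptoticallyOrthogonal 𝕜 ψ := by
  intro ε hε
  obtain ⟨N, hN⟩ := Metric.tendsto_atTop.mp hf ε hε
  refine ⟨N, fun m k hmk => ?_⟩
  obtain ⟨n, rfl⟩ : ∃ n, k = m + n := ⟨k - m, by omega⟩
  simpa [hψ, dist_eq_norm] using hN n (by omega)

theorem lt_norm_sub_of_norm_inner_lt {a b : E} {c : ℝ} (ha : ‖a‖ = c) (hb : ‖b‖ = c)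
    (hab : ‖(inner 𝕜 a b : 𝕜)‖ < c ^ 2 / 2) : c < ‖a - b‖ := by
  have hsq : ‖a - b‖ ^ 2 = ‖a‖ ^ 2 - 2 * RCLike.re (inner 𝕜 a b : 𝕜) + ‖b‖ ^ 2 :=
    norm_sub_sq (𝕜 := 𝕜) a b
  have hre := RCLike.re_le_norm (inner 𝕜 a b : 𝕜)
  nlinarith [norm_nonneg (a - b)]

namespace AsymptoticallyOrthogonal

variable {ψ : ℕ → E} {c : ℝ}

theorem not_cauchySeq_comp (h : AsymptoticallyOrthogonal 𝕜 ψ) (hc : 0 < c)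
    (hψ : ∀ m, ‖ψ m‖ = c) {φ : ℕ → ℕ} (hφ : StrictMono φ) : ¬ CauchySeq (ψ ∘ φ) := by
  intro hcauchy
  obtain ⟨N, hN⟩ := h (c ^ 2 / 2) (by positivity)
  obtain ⟨M, hM⟩ := Metric.cauchySeq_iff'.mp hcauchy c hc
  have hgap : φ M + N ≤ φ (N + M) := by simpa [add_comm] using hφ.add_le_nat N M
  have hfar : c < ‖ψ (φ M) - ψ (φ (N + M))‖ :=
    lt_norm_sub_of_norm_inner_lt (hψ _) (hψ _) (hN _ _ hgap)
  have hnear : ‖ψ (φ M) - ψ (φ (N + M))‖ < c := by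
    rw [← dist_eq_norm, dist_comm]
    exact hM (N + M) (Nat.le_add_left M N)
  exact hfar.not_gt hnear

theorem not_exists_tendsto_comp (h : AsymptoticallyOrthogonal 𝕜 ψ) (hc : 0 < c)
    (hψ : ∀ m, ‖ψ m‖ = c) :
    ¬ ∃ (φ : ℕ → ℕ) (ξ : E), StrictMono φ ∧ Tendsto (ψ ∘ φ) atTop (𝓝 ξ) :=
  fun ⟨_, _, hφ, hlim⟩ => h.not_cauchySeq_comp hc hψ hφ hlim.cauchySeq

end AsymptoticallyOrthogonal

end AsymptoticOrthogonality

section Translations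

variable {𝕜 E : Type*} [RCLike 𝕜] [NormedAddCommGroup E] [InnerProductSpace 𝕜 E]
  {v : E →ₗᵢ[𝕜] E} {e : E →L[𝕜] E}

theorem norm_apply_iterate (hcomm : Function.Commute e v) (ξ : E) (m : ℕ) :
    ‖e (v^[m] ξ)‖ = ‖e ξ‖ := by
  rw [(hcomm.iterate_right m).eq, ← LinearIsometry.coe_pow, LinearIsometry.norm_map]

theorem inner_apply_iterate_apply_iterate_add (he : (e : E →ₗ[𝕜] E).IsSymmetric)
    (hcomm : Function.Commute e v) (ξ : E) (m n : ℕ) :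
    inner 𝕜 (e (v^[m] ξ)) (e (v^[m + n] ξ)) = inner 𝕜 ξ (v^[n] (e (e ξ))) := by
  rw [(hcomm.iterate_right m).eq, (hcomm.iterate_right (m + n)).eq,
    Function.iterate_add_apply, ← LinearIsometry.coe_pow, LinearIsometry.inner_map_map,
    ← (hcomm.iterate_right n).eq (e ξ)]
  exact he ξ _

theorem asymptoticallyOrthogonal_apply_iterate (he : (e : E →ₗ[𝕜] E).IsSymmetric)
    (hcomm : Function.Commute e v) {ξ : E}
    (hmix : Tendsto (fun n => inner 𝕜 ξ (v^[n] (e (e ξ)))) atTop (𝓝 0)) :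
    AsymptoticallyOrthogonal 𝕜 (fun m => e (v^[m] ξ)) :=
  asymptoticallyOrthogonal_of_inner_add_eq (inner_apply_iterate_apply_iterate_add he hcomm ξ) hmix

end Translations

section Conjugation

variable {𝕜 E : Type*} [RCLike 𝕜] [NormedAddCommGroup E] [InnerProductSpace 𝕜 E]
  (u : E ≃ₗᵢ[𝕜] E)

def isometryConj (B : E →L[𝕜] E) : E →L[𝕜] E :=
  u.toLinearIsometry.toContinuousLinearMap ∘L B ∘L u.symm.toLinearIsometry.toContinuousLinearMap

theorem norm_isometryConj_le (B : E →L[𝕜] E) : ‖isometryConj u B‖ ≤ ‖B‖ :=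
  (isometryConj u B).opNorm_le_bound (norm_nonneg B) fun x => by
    simpa [isometryConj] using B.le_opNorm (u.symm x)

theorem norm_iterate_isometryConj_le (B : E →L[𝕜] E) (m : ℕ) :
    ‖(isometryConj u)^[m] B‖ ≤ ‖B‖ := by
  induction m with
  | zero => rfl
  | succ m ih =>
    rw [Function.iterate_succ_apply']
    exact (norm_isometryConj_le u _).trans ih

variable {u}

theorem iterate_isometryConj_apply {Ω : E} (huΩ : u Ω = Ω) (B : E →L[𝕜] E) (m : ℕ) :
    (isometryConj u)^[m] B Ω = u^[m] (B Ω) :=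
  Function.Semiconj.iterate_right (f := fun B : E →L[𝕜] E => B Ω)
    (fun B => by simp [isometryConj, u.symm_apply_eq.mpr huΩ.symm]) m B

end Conjugation

theorem statement14_general {H : Type*} [NormedAddCommGroup H] [InnerProductSpace ℂ H]
    [CompleteSpace H]
    (Ω : H)
    (u : H ≃ₗᵢ[ℂ] H) (huΩ : u Ω = Ω)
    (e : H →L[ℂ] H) (he_sa : IsSelfAdjoint e)
    (hcomm : ∀ ξ : H, e (u ξ) = u (e ξ))
    (S : StarSubalgebra ℂ (H →L[ℂ] H))
    (hstable : ∀ B ∈ S,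
      (u.toLinearIsometry.toContinuousLinearMap ∘L B ∘L
        u.symm.toLinearIsometry.toContinuousLinearMap) ∈ S)
    (hcluster : ∀ ξ η : H,
      Tendsto (fun m : ℕ => (inner ℂ ξ ((⇑u)^[m] η) : ℂ)) atTop
        (nhds ((inner ℂ ξ Ω : ℂ) * (inner ℂ Ω η : ℂ))))
    (A : H →L[ℂ] H) (hA : A ∈ S)
    (hAΩ : (inner ℂ Ω (A Ω) : ℂ) = 0) (heA : e (A Ω) ≠ 0) :
    (∀ m : ℕ, ‖e ((⇑u)^[m] (A Ω))‖ = ‖e (A Ω)‖) ∧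
    (∀ ε : ℝ, 0 < ε → ∃ N : ℕ, ∀ m k : ℕ, m + N ≤ k →
      ‖(inner ℂ (e ((⇑u)^[m] (A Ω))) (e ((⇑u)^[k] (A Ω))) : ℂ)‖ < ε) ∧
    (¬ ∃ (φ : ℕ → ℕ) (ξ : H), StrictMono φ ∧
      Tendsto (fun j : ℕ => e ((⇑u)^[φ j] (A Ω))) atTop (nhds ξ)) ∧
    (¬ ∃ K : Set H, IsCompact K ∧ ∀ B ∈ S, ‖B‖ ≤ ‖A‖ → e (B Ω) ∈ K) := by
  have hcomm' : Function.Commute e u.toLinearIsometry := hcomm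
  have hnorm : ∀ m, ‖e ((⇑u)^[m] (A Ω))‖ = ‖e (A Ω)‖ := norm_apply_iterate hcomm' (A Ω)
  have hmix : Tendsto (fun n => inner ℂ (A Ω) ((⇑u)^[n] (e (e (A Ω))))) atTop (𝓝 0) := by
    simpa [inner_eq_zero_symm.mp hAΩ] using hcluster (A Ω) (e (e (A Ω)))
  have horth : AsymptoticallyOrthogonal ℂ (fun m => e ((⇑u)^[m] (A Ω))) :=
    asymptoticallyOrthogonal_apply_iterate
      (ContinuousLinearMap.isSelfAdjoint_iff_isSymmetric.mp he_sa) hcomm' hmix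
  have hno_subseq := horth.not_exists_tendsto_comp (norm_pos_iff.mpr heA) hnorm
  refine ⟨hnorm, horth, hno_subseq, ?_⟩
  rintro ⟨K, hK, hKS⟩
  have hmem : ∀ m, e ((⇑u)^[m] (A Ω)) ∈ K := fun m => by
    rw [← iterate_isometryConj_apply huΩ]
    exact hKS _ (Set.MapsTo.iterate (f := isometryConj u) hstable m hA)
      (norm_iterate_isometryConj_le u A m)
  obtain ⟨ξ, -, φ, hφ, hlim⟩ := hK.tendsto_subseq hmem
  exact hno_subseq ⟨φ, ξ, hφ, hlim⟩

/-- in a Hilbert space carrying a unitary translation `u` with invariant unit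
vacuum vector `Ω` satisfying the cluster property, and a positive-temperature damping
operator `e` ("`e^{-βH}`", self-adjoint, fixing `Ω`, commuting with the translations),
the map `Θ_{β,W} : A ↦ e(AΩ)` on a translation-stable operator algebra `S` ("`A(W)`",
with `W + x ⊂ W`) is not compact whenever `S` contains a nonzero `A` with
`⟨Ω, AΩ⟩ = 0` and `e(AΩ) ≠ 0`: the sequence `Ψₙ = e(U(nx) A U(nx)⁻¹ Ω)` has constant
nonzero norm, its scalar products `⟨Ψₙ, Ψₘ⟩` tend to `0` as `|n-m| → ∞`, and it has no
norm-convergent subsequence. -/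
theorem statement14 {H : Type*} [NormedAddCommGroup H] [InnerProductSpace ℂ H]
    [CompleteSpace H]
    (Ω : H) (hΩ : ‖Ω‖ = 1)
    (u : H ≃ₗᵢ[ℂ] H) (huΩ : u Ω = Ω)
    (e : H →L[ℂ] H) (he_sa : IsSelfAdjoint e) (heΩ : e Ω = Ω)
    (hcomm : ∀ ξ : H, e (u ξ) = u (e ξ))
    (S : StarSubalgebra ℂ (H →L[ℂ] H))
    (hstable : ∀ B ∈ S,
      (u.toLinearIsometry.toContinuousLinearMap ∘L B ∘L
        u.symm.toLinearIsometry.toContinuousLinearMap) ∈ S)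
    (hcluster : ∀ ξ η : H,
      Tendsto (fun m : ℕ => (inner ℂ ξ ((⇑u)^[m] η) : ℂ)) atTop
        (nhds ((inner ℂ ξ Ω : ℂ) * (inner ℂ Ω η : ℂ))))
    (A : H →L[ℂ] H) (hA : A ∈ S) (hA0 : A ≠ 0)
    (hAΩ : (inner ℂ Ω (A Ω) : ℂ) = 0) (heA : e (A Ω) ≠ 0) :
    (∀ m : ℕ, ‖e ((⇑u)^[m] (A Ω))‖ = ‖e (A Ω)‖) ∧
    (∀ ε : ℝ, 0 < ε → ∃ N : ℕ, ∀ m k : ℕ, m + N ≤ k →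
      ‖(inner ℂ (e ((⇑u)^[m] (A Ω))) (e ((⇑u)^[k] (A Ω))) : ℂ)‖ < ε) ∧
    (¬ ∃ (φ : ℕ → ℕ) (ξ : H), StrictMono φ ∧
      Tendsto (fun j : ℕ => e ((⇑u)^[φ j] (A Ω))) atTop (nhds ξ)) ∧
    (¬ ∃ K : Set H, IsCompact K ∧ ∀ B ∈ S, ‖B‖ ≤ ‖A‖ → e (B Ω) ∈ K) :=
  statement14_general Ω u huΩ e he_sa hcomm S hstable hcluster A hA hAΩ heA
end
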